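/- Let Σ be a finite set, a ≥ 1 an integer, and let c_1,…,c_a : Σ → ℂ have pairwise disjoint supports and d_1,…,d_a : Σ → ℂ have pairwise disjoint supports. Then the inner product of the corresponding product states in H_a is given by the permanent-type formula ⟨Φ(c_1,…,c_a), Φ(d_1,…,d_a)⟩ = ∑_{σ ∈ S_a} ∏_{j=1}^{a} ⟨c_j, d_{σ(j)}⟩, where S_a is the group of permutations of {1,…,a} and ⟨c,d⟩ = ∑_{μ∈Σ} conj(c(μ))·d(μ). (Generalization of equation (G5): the Gram matrix of a-magnon states is determined by the Gram matrix of 1-magnon states.) -/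

import Mathlib

/-- The localized `a`-magnon product state `Φ(c_1,…,c_a)` as a function on finite subsets
of `Σ` (an element of `H_a`). -/
noncomputable def magnon {σ : Type*} [Fintype σ] [DecidableEq σ]
    {ι : Type*} [Fintype ι] [DecidableEq ι] (c : ι → σ → ℂ) : Finset σ → ℂ :=
  fun S => ∑ g : ι → σ,
    if Function.Injective g ∧ Finset.image g Finset.univ = S then ∏ j, c j (g j) else 0

/-!
Every bijection onto `g(ι)`, for `g` injective, is `g ∘ π` for a unique permutation `π`, so
`⟨Φ(c), Φ(d)⟩ = ∑_{g injective} ∑_π ∏_j conj (c_j (g j)) · d_{π j} (g j)`.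
Expanding the product of sums on the right-hand side gives the same sum over all maps `g`, and
the terms with `g` not injective vanish because the `c_j` have pairwise disjoint supports.
-/

open Finset Function

theorem Function.Injective.exists_perm_comp_eq {ι σ : Type*} [Fintype ι] [DecidableEq σ]
    {g h : ι → σ} (hg : Injective g) (hh : Injective h)
    (him : image h univ = image g univ) : ∃ π : Equiv.Perm ι, g ∘ π = h := by
  have hrange : Set.range h = Set.range g := by
    simpa using congrArg ((↑) : Finset σ → Set σ) him
  refine ⟨(Equiv.ofInjective h hh).trans
    ((Equiv.setCongr hrange).trans (Equiv.ofInjective g hg).symm), ?_⟩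
  funext j
  simp [Equiv.apply_ofInjective_symm]

theorem prod_apply_eq_zero_of_not_injective {ι σ M : Type*} [Fintype ι] [CommMonoidWithZero M]
    {c : ι → σ → M} (hc : Pairwise fun i j => Disjoint (support (c i)) (support (c j)))
    {g : ι → σ} (hg : ¬ Injective g) : ∏ j, c j (g j) = 0 := by
  obtain ⟨i, j, hij, hne⟩ := not_injective_iff.mp hg
  have : c i (g i) = 0 ∨ c j (g j) = 0 := by
    by_contra! h
    exact Set.disjoint_left.mp (hc hne) h.1 (by rw [mem_support, hij]; exact h.2)
  rcases this with h | h
  · exact prod_eq_zero (mem_univ i) h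
  · exact prod_eq_zero (mem_univ j) h

section magnon

variable {σ ι : Type*} [Fintype σ] [DecidableEq σ] [Fintype ι] [DecidableEq ι]

theorem filter_injective_image_eq_image_comp_perm {g : ι → σ} (hg : Injective g) :
    univ.filter (fun h : ι → σ => Injective h ∧ image h univ = image g univ)
      = univ.image fun π : Equiv.Perm ι => g ∘ π := by
  ext h
  simp only [mem_filter, mem_univ, true_and, mem_image]
  constructor
  · rintro ⟨hh, him⟩
    exact hg.exists_perm_comp_eq hh him
  · rintro ⟨π, rfl⟩
    exact ⟨hg.comp π.injective, by rw [← image_image, image_univ_equiv]⟩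

theorem magnon_image_of_injective (c : ι → σ → ℂ) {g : ι → σ} (hg : Injective g) :
    magnon c (image g univ) = ∑ π : Equiv.Perm ι, ∏ j, c j (g (π j)) := by
  rw [magnon, ← sum_filter, filter_injective_image_eq_image_comp_perm hg,
    sum_image fun π _ π' _ h => Equiv.ext (congrFun (hg.comp_left h))]
  rfl

theorem sum_conj_magnon_mul_magnon (c d : ι → σ → ℂ) :
    ∑ S, starRingEnd ℂ (magnon c S) * magnon d S
      = ∑ π : Equiv.Perm ι, ∑ g with Injective g,
          ∏ j, starRingEnd ℂ (c j (g j)) * d (π j) (g j) := by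
  calc ∑ S, starRingEnd ℂ (magnon c S) * magnon d S
      = ∑ S, ∑ g with Injective g ∧ image g univ = S,
          starRingEnd ℂ (∏ j, c j (g j)) * magnon d (image g univ) := by
        refine sum_congr rfl fun S _ => ?_
        rw [magnon, ← sum_filter, map_sum, sum_mul]
        exact sum_congr rfl fun g hg => by rw [(mem_filter.mp hg).2.2]
    _ = ∑ g with Injective g, starRingEnd ℂ (∏ j, c j (g j)) * magnon d (image g univ) := by
        simp_rw [← filter_filter]
        exact sum_fiberwise _ _ _
    _ = ∑ g with Injective g, ∑ π : Equiv.Perm ι,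
          ∏ j, starRingEnd ℂ (c j (g j)) * d (π j) (g j) := by
        refine sum_congr rfl fun g hg => ?_
        rw [magnon_image_of_injective d (mem_filter.mp hg).2, mul_sum,
          ← Equiv.sum_comp (Equiv.inv _)]
        refine sum_congr rfl fun π _ => ?_
        rw [Equiv.inv_apply, prod_mul_distrib, map_prod,
          ← Equiv.prod_comp π fun j => d j (g (π⁻¹ j))]
        simp
    _ = _ := sum_comm

end magnon

theorem magnon_inner_permanent_general
    {σ : Type*} [Fintype σ] [DecidableEq σ] {a : ℕ}
    (c d : Fin a → σ → ℂ)
    (hc : ∀ i j : Fin a, i ≠ j →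
      Disjoint (Function.support (c i)) (Function.support (c j))) :
    ∑ S : Finset σ, (starRingEnd ℂ) (magnon c S) * magnon d S
      = ∑ π : Equiv.Perm (Fin a), ∏ j : Fin a,
          ∑ μ : σ, (starRingEnd ℂ) (c j μ) * d (π j) μ := by
  rw [sum_conj_magnon_mul_magnon]
  refine sum_congr rfl fun π _ => ?_
  rw [Fintype.prod_sum]
  refine sum_filter_of_ne fun g _ hne => ?_
  contrapose! hne
  rw [prod_mul_distrib, ← map_prod, prod_apply_eq_zero_of_not_injective hc hne, map_zero,
    zero_mul]

/-- Equation (G5), generalized: if `c_1,…,c_a` have pairwise disjoint supports and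
`d_1,…,d_a` have pairwise disjoint supports, then the `H_a` inner product of the product
states is the permanent-type expression
`⟨Φ(c), Φ(d)⟩ = ∑_{π ∈ S_a} ∏_j ⟨c_j, d_{π(j)}⟩`. -/
theorem magnon_inner_permanent
    {σ : Type*} [Fintype σ] [DecidableEq σ] {a : ℕ} (ha : 1 ≤ a)
    (c d : Fin a → σ → ℂ)
    (hc : ∀ i j : Fin a, i ≠ j →
      Disjoint (Function.support (c i)) (Function.support (c j)))
    (hd : ∀ i j : Fin a, i ≠ j →
      Disjoint (Function.support (d i)) (Function.support (d j))) :
    ∑ S : Finset σ, (starRingEnd ℂ) (magnon c S) * magnon d S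
      = ∑ π : Equiv.Perm (Fin a), ∏ j : Fin a,
          ∑ μ : σ, (starRingEnd ℂ) (c j μ) * d (π j) μ :=
  magnon_inner_permanent_general c d hc
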